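/- Fix κ ≥ 1, r = (r_1,…,r_κ) ∈ ℂ^κ with Re r_i > 0 for all i, real numbers s > 0, R > 1, 𝒦 ≥ 0, λ ∈ ℂ with Re λ ≥ 0, and integers 0 ≤ ℓ < j. For m ∈ ℤ₊^κ write |m| = m_1+…+m_κ and ⟨m,r⟩ = m_1 r_1+…+m_κ r_κ; for a complex polynomial C(t) = Σ_i a_i t^i set ‖C‖_R = Σ_i |a_i| R^i; for k ∈ ℤ₊^κ define Δ_k v = (λ+⟨k,r⟩)·v + dv/dt on ℂ[t]; let H^ℓ and H^0 be the sets of families η = (C_m)_{m ∈ ℤ₊^κ∖{0}} of polynomials with deg C_m ≤ 𝒦|m| and, respectively, ‖η‖_ℓ := Σ_m (|λ+⟨m,r⟩| + 𝒦|m|)^ℓ / |Γ(⟨m,r⟩/s)| · ‖C_m‖_R < ∞ and ‖η‖_0 := Σ_m ‖C_m‖_R / |Γ(⟨m,r⟩/s)| < ∞. Let l ∈ ℤ₊^κ∖{0} satisfy Re⟨l,r⟩ ≥ (j−ℓ)·s, and let a ∈ ℂ[t] with deg a ≤ 𝒦|l|. Then there exists Ã > 0 such that for every η = (C_m) ∈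 H^ℓ, the family (D_m)_{m ∈ ℤ₊^κ∖{0}} defined by D_m = a·(Δ_{m−l})^j C_{m−l} if m−l ∈ ℤ₊^κ∖{0} and D_m = 0 otherwise, belongs to H^0 and satisfies ‖(D_m)‖_0 ≤ Ã·‖η‖_ℓ. -/

import Mathlib

open scoped Classical

/-- The weighted `ℓ¹`-norm on complex polynomials. -/
noncomputable def normR (R : ℝ) (C : Polynomial ℂ) : ℝ :=
  ∑ i ∈ C.support, ‖C.coeff i‖ * R ^ i

/-- `|m| = m_1 + … + m_κ` for a multi-index `m`. -/
def msize {κ : ℕ} (m : Fin κ → ℕ) : ℕ := ∑ i, m i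

/-- `⟨m,r⟩ = m_1 r_1 + … + m_κ r_κ`. -/
noncomputable def mdot {κ : ℕ} (r : Fin κ → ℂ) (m : Fin κ → ℕ) : ℂ := ∑ i, (m i : ℂ) * r i

/-- The operator `Δ_k v = (λ+⟨k,r⟩)·v + dv/dt` on `ℂ[t]`. -/
noncomputable def DeltaOp {κ : ℕ} (lam : ℂ) (r : Fin κ → ℂ) (k : Fin κ → ℕ)
    (v : Polynomial ℂ) : Polynomial ℂ :=
  Polynomial.C (lam + mdot r k) * v + Polynomial.derivative v

/-- The Gamma-weighted norm `‖η‖_j`. -/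
noncomputable def normJ {κ : ℕ} (r : Fin κ → ℂ) (s R 𝒦 : ℝ) (lam : ℂ) (j : ℕ)
    (η : (Fin κ → ℕ) → Polynomial ℂ) : ℝ :=
  ∑' m : {m : Fin κ → ℕ // m ≠ 0},
    (‖lam + mdot r m.1‖ + 𝒦 * msize m.1) ^ j /
      ‖Complex.Gamma (mdot r m.1 / (s : ℂ))‖ * normR R (η m.1)

/-- Membership in the space `H^j`. -/
def memHJ {κ : ℕ} (r : Fin κ → ℂ) (s R 𝒦 : ℝ) (lam : ℂ) (j : ℕ)
    (η : (Fin κ → ℕ) → Polynomial ℂ) : Prop :=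
  η 0 = 0 ∧ (∀ m : Fin κ → ℕ, ((η m).natDegree : ℝ) ≤ 𝒦 * msize m) ∧
  Summable (fun m : {m : Fin κ → ℕ // m ≠ 0} =>
    (‖lam + mdot r m.1‖ + 𝒦 * msize m.1) ^ j /
      ‖Complex.Gamma (mdot r m.1 / (s : ℂ))‖ * normR R (η m.1))

/-!
The shift `m = k + l` moves the Gamma argument from `z = ⟨k,r⟩/s` to `z + w` with
`w = ⟨l,r⟩/s`, `Re w ≥ j - ℓ`. From `Γ(z)Γ(w) = Γ(z+w)B(z,w)` and
`|B(z,w)| ≤ B(Re z, j-ℓ) ≤ (j-ℓ-1)!/(Re z)^(j-ℓ)`, the weight `1/|Γ(z+w)|` gains a factor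
`(Re z)^(j-ℓ)` over `1/|Γ(z)|`. This pays for the `j - ℓ` excess powers of
`|λ+⟨k,r⟩| + 𝒦|k| = O(Re z)` produced by `Δ_k^j`: since `deg C_k ≤ 𝒦|k|`, each `Δ_k` multiplies
`‖·‖_R` by at most that factor.
-/

open Polynomial

section normR

variable {R : ℝ}

lemma normR_eq_sum_of_support_subset {p : ℂ[X]} {S : Finset ℕ} (h : p.support ⊆ S) :
    normR R p = ∑ i ∈ S, ‖p.coeff i‖ * R ^ i :=
  Finset.sum_subset h fun i _ hi => by simp [notMem_support_iff.mp hi]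

lemma normR_nonneg (hR : 0 ≤ R) (p : ℂ[X]) : 0 ≤ normR R p :=
  Finset.sum_nonneg fun _ _ => by positivity

lemma normR_add_le (hR : 0 ≤ R) (p q : ℂ[X]) : normR R (p + q) ≤ normR R p + normR R q := by
  rw [normR_eq_sum_of_support_subset support_add,
    normR_eq_sum_of_support_subset (Finset.subset_union_left (s₂ := q.support)),
    normR_eq_sum_of_support_subset (Finset.subset_union_right (s₁ := p.support)),
    ← Finset.sum_add_distrib]
  gcongr with i
  rw [← add_mul, coeff_add]
  gcongr
  exact norm_add_le _ _

lemma normR_sum_le (hR : 0 ≤ R) {ι : Type*} (S : Finset ι) (f : ι → ℂ[X]) :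
    normR R (∑ i ∈ S, f i) ≤ ∑ i ∈ S, normR R (f i) :=
  Finset.le_sum_of_subadditive _ (by simp [normR]) (normR_add_le hR) S f

lemma support_monomial_mul_subset (n : ℕ) (c : ℂ) (p : ℂ[X]) :
    (monomial n c * p).support ⊆ p.support.map (addRightEmbedding n) := by
  intro i hi
  rw [mem_support_iff, ← C_mul_X_pow_eq_monomial, mul_assoc, coeff_C_mul, coeff_X_pow_mul'] at hi
  split_ifs at hi with hni
  · exact Finset.mem_map.mpr ⟨i - n, mem_support_iff.mpr (right_ne_zero_of_mul hi), by simp [hni]⟩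
  · simp at hi

lemma normR_monomial_mul (n : ℕ) (c : ℂ) (p : ℂ[X]) :
    normR R (monomial n c * p) = ‖c‖ * R ^ n * normR R p := by
  rw [normR_eq_sum_of_support_subset (support_monomial_mul_subset n c p), Finset.sum_map, normR,
    Finset.mul_sum]
  refine Finset.sum_congr rfl fun i _ => ?_
  rw [addRightEmbedding_apply, coeff_monomial_mul, norm_mul, pow_add]
  ring

lemma normR_C_mul (c : ℂ) (p : ℂ[X]) : normR R (C c * p) = ‖c‖ * normR R p := by
  simpa using normR_monomial_mul 0 c p

lemma normR_mul_le (hR : 0 ≤ R) (p q : ℂ[X]) : normR R (p * q) ≤ normR R p * normR R q := by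
  conv_lhs => rw [p.as_sum_support, Finset.sum_mul]
  refine (normR_sum_le hR _ _).trans_eq ?_
  simp only [normR_monomial_mul]
  exact (Finset.sum_mul _ _ _).symm

lemma normR_derivative_le (hR : 1 ≤ R) (p : ℂ[X]) :
    normR R (derivative p) ≤ p.natDegree * normR R p := by
  set n := p.natDegree
  have hsupp : (derivative p).support ⊆ Finset.range n := fun i hi => by
    rw [mem_support_iff, coeff_derivative] at hi
    exact Finset.mem_range.mpr (le_natDegree_of_ne_zero (left_ne_zero_of_mul hi))
  rw [normR_eq_sum_of_support_subset hsupp,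
    normR_eq_sum_of_support_subset supp_subset_range_natDegree_succ, Finset.sum_range_succ',
    mul_add, Finset.mul_sum]
  refine le_add_of_le_of_nonneg (Finset.sum_le_sum fun i hi => ?_) (by positivity)
  have hi : (i + 1 : ℝ) ≤ n := by exact_mod_cast Finset.mem_range.mp hi
  have hRi : R ^ i ≤ R ^ i * R := le_mul_of_one_le_right (by positivity) hR
  rw [coeff_derivative, norm_mul, pow_succ, ← Nat.cast_succ, Complex.norm_natCast]
  calc ‖p.coeff (i + 1)‖ * ↑(i + 1) * R ^ i ≤ ‖p.coeff (i + 1)‖ * n * (R ^ i * R) := by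
        push_cast; gcongr
    _ = n * (‖p.coeff (i + 1)‖ * (R ^ i * R)) := by ring

end normR

section DeltaOp

variable {κ : ℕ} (lam : ℂ) (r : Fin κ → ℂ) (k : Fin κ → ℕ)

lemma natDegree_deltaOp_le (v : ℂ[X]) : (DeltaOp lam r k v).natDegree ≤ v.natDegree :=
  (natDegree_add_le _ _).trans <|
    max_le (natDegree_C_mul_le _ _) ((natDegree_derivative_le v).trans (Nat.sub_le _ _))

lemma natDegree_iterate_deltaOp_le (j : ℕ) (v : ℂ[X]) :
    ((DeltaOp lam r k)^[j] v).natDegree ≤ v.natDegree := by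
  induction j with
  | zero => rfl
  | succ j ih =>
    rw [Function.iterate_succ_apply']
    exact (natDegree_deltaOp_le lam r k _).trans ih

variable {R N : ℝ}

lemma normR_deltaOp_le (hR : 1 ≤ R) {v : ℂ[X]} (hv : (v.natDegree : ℝ) ≤ N) :
    normR R (DeltaOp lam r k v) ≤ (‖lam + mdot r k‖ + N) * normR R v := by
  have hR0 : 0 ≤ R := zero_le_one.trans hR
  calc normR R (DeltaOp lam r k v)
      ≤ ‖lam + mdot r k‖ * normR R v + v.natDegree * normR R v :=
        (normR_add_le hR0 _ _).trans (add_le_add (normR_C_mul _ _).le (normR_derivative_le hR v))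
    _ ≤ (‖lam + mdot r k‖ + N) * normR R v := by
        rw [add_mul]; gcongr; exact normR_nonneg hR0 v

lemma normR_iterate_deltaOp_le (hR : 1 ≤ R) (j : ℕ) {v : ℂ[X]} (hv : (v.natDegree : ℝ) ≤ N) :
    normR R ((DeltaOp lam r k)^[j] v) ≤ (‖lam + mdot r k‖ + N) ^ j * normR R v := by
  have hN : 0 ≤ ‖lam + mdot r k‖ + N := add_nonneg (norm_nonneg _) ((Nat.cast_nonneg _).trans hv)
  induction j with
  | zero => simp
  | succ j ih =>
    rw [Function.iterate_succ_apply', pow_succ', mul_assoc]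
    refine (normR_deltaOp_le lam r k hR ((Nat.cast_le.mpr ?_).trans hv)).trans (by gcongr)
    exact natDegree_iterate_deltaOp_le lam r k j v

end DeltaOp

section Beta

open Complex MeasureTheory Nat

lemma betaIntegrand_ofReal {x u t : ℝ} (ht : t ∈ Set.Icc (0 : ℝ) 1) :
    (t : ℂ) ^ ((x : ℂ) - 1) * (1 - (t : ℂ)) ^ ((u : ℂ) - 1) =
      ((t ^ (x - 1) * (1 - t) ^ (u - 1) : ℝ) : ℂ) := by
  rw [ofReal_mul, ofReal_cpow ht.1, ofReal_cpow (sub_nonneg.mpr ht.2)]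
  push_cast
  ring

lemma betaIntegral_ofReal (x u : ℝ) :
    betaIntegral x u = ((∫ t in (0 : ℝ)..1, t ^ (x - 1) * (1 - t) ^ (u - 1) : ℝ) : ℂ) := by
  rw [betaIntegral, ← intervalIntegral.integral_ofReal]
  refine intervalIntegral.integral_congr fun t ht => ?_
  exact betaIntegrand_ofReal (by rwa [Set.uIcc_of_le zero_le_one] at ht)

lemma intervalIntegrable_betaIntegrand {x u : ℝ} (hx : 0 < x) (hu : 0 < u) :
    IntervalIntegrable (fun t : ℝ => t ^ (x - 1) * (1 - t) ^ (u - 1)) volume 0 1 := by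
  refine (betaIntegral_convergent (u := x) (v := u) (by simpa) (by simpa)).norm.congr
    fun t ht => ?_
  rw [Set.uIoc_of_le zero_le_one] at ht
  rw [betaIntegrand_ofReal (Set.Ioc_subset_Icc_self ht), norm_real,
    Real.norm_of_nonneg (mul_nonneg (Real.rpow_nonneg ht.1.le _)
      (Real.rpow_nonneg (sub_nonneg.mpr ht.2) _))]

lemma norm_betaIntegral_le {z w : ℂ} {u : ℝ} (hz : 0 < z.re) (hu : 0 < u) (huw : u ≤ w.re) :
    ‖betaIntegral z w‖ ≤ ‖betaIntegral z.re u‖ := by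
  have hint := intervalIntegrable_betaIntegrand hz hu
  rw [betaIntegral_ofReal, norm_real, Real.norm_of_nonneg (intervalIntegral.integral_nonneg
    zero_le_one fun t ht => mul_nonneg (Real.rpow_nonneg ht.1 _)
      (Real.rpow_nonneg (sub_nonneg.mpr ht.2) _))]
  refine intervalIntegral.norm_integral_le_of_norm_le zero_le_one ?_ hint
  filter_upwards [volume.ae_ne 1] with t ht1 ht
  have h1t : 0 < 1 - t := sub_pos.mpr (lt_of_le_of_ne ht.2 ht1)
  rw [norm_mul, norm_cpow_eq_rpow_re_of_pos ht.1,
    show 1 - (t : ℂ) = ((1 - t : ℝ) : ℂ) by push_cast; rfl, norm_cpow_eq_rpow_re_of_pos h1t]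
  simp only [sub_re, one_re]
  exact mul_le_mul_of_nonneg_left
    (Real.rpow_le_rpow_of_exponent_ge h1t (by linarith [ht.1]) (by linarith))
    (Real.rpow_nonneg ht.1.le _)

lemma re_pow_mul_norm_betaIntegral_le {z w : ℂ} (hz : 0 < z.re) (n : ℕ)
    (hw : (n : ℝ) + 1 ≤ w.re) : z.re ^ (n + 1) * ‖betaIntegral z w‖ ≤ n ! := by
  set x := z.re
  have hprod : x ^ (n + 1) ≤ ∏ j ∈ Finset.range (n + 1), (x + j) := by
    simpa using Finset.prod_le_prod (s := Finset.range (n + 1)) (fun _ _ => hz.le)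
      fun j _ => le_add_of_nonneg_right (Nat.cast_nonneg (α := ℝ) j)
  have hbeta : ‖betaIntegral x (n + 1 : ℝ)‖ = n ! / ∏ j ∈ Finset.range (n + 1), (x + j) := by
    rw [show (((n + 1 : ℝ)) : ℂ) = n + 1 by push_cast; rfl,
      betaIntegral_eval_nat_add_one_right (by simpa) n,
      show (n ! : ℂ) / ∏ j ∈ Finset.range (n + 1), ((x : ℂ) + j) =
        ((n ! / ∏ j ∈ Finset.range (n + 1), (x + j) : ℝ) : ℂ) by push_cast; rfl,
      norm_real, Real.norm_of_nonneg (by positivity)]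
  have hP : 0 < ∏ j ∈ Finset.range (n + 1), (x + j) := (pow_pos hz _).trans_le hprod
  calc x ^ (n + 1) * ‖betaIntegral z w‖
      ≤ x ^ (n + 1) * (n ! / ∏ j ∈ Finset.range (n + 1), (x + j)) := by
        rw [← hbeta]; gcongr; exact norm_betaIntegral_le hz (by positivity) hw
    _ ≤ n ! := by
        rw [mul_div_left_comm]
        exact mul_le_of_le_one_right (by positivity) ((div_le_one hP).mpr hprod)

lemma pow_div_norm_Gamma_add_le {z w : ℂ} {n : ℕ} {W c : ℝ} (hz : 0 < z.re)
    (hw : (n : ℝ) + 1 ≤ w.re) (hW0 : 0 ≤ W) (hW : W ≤ c * z.re) :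
    W ^ (n + 1) / ‖Gamma (z + w)‖ ≤ c ^ (n + 1) * n ! / ‖Gamma w‖ / ‖Gamma z‖ := by
  have hw0 : 0 < w.re := by linarith
  have hc : 0 ≤ c := nonneg_of_mul_nonneg_left (hW0.trans hW) hz
  have hΓz : 0 < ‖Gamma z‖ := norm_pos_iff.mpr (Gamma_ne_zero_of_re_pos hz)
  have hΓw : 0 < ‖Gamma w‖ := norm_pos_iff.mpr (Gamma_ne_zero_of_re_pos hw0)
  have hΓzw : 0 < ‖Gamma (z + w)‖ :=
    norm_pos_iff.mpr (Gamma_ne_zero_of_re_pos (by rw [add_re]; positivity))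
  have hbeta : ‖Gamma w‖ * ‖Gamma z‖ = ‖Gamma (z + w)‖ * ‖betaIntegral z w‖ := by
    rw [← norm_mul, ← norm_mul, mul_comm, Gamma_mul_Gamma_eq_betaIntegral hz hw0]
  have hWB : W ^ (n + 1) * ‖betaIntegral z w‖ ≤ c ^ (n + 1) * n ! :=
    calc W ^ (n + 1) * ‖betaIntegral z w‖
        ≤ (c * z.re) ^ (n + 1) * ‖betaIntegral z w‖ := by gcongr
      _ = c ^ (n + 1) * (z.re ^ (n + 1) * ‖betaIntegral z w‖) := by ring
      _ ≤ c ^ (n + 1) * n ! := by gcongr; exact re_pow_mul_norm_betaIntegral_le hz n hw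
  rw [div_div, div_le_div_iff₀ hΓzw (mul_pos hΓw hΓz), hbeta]
  calc W ^ (n + 1) * (‖Gamma (z + w)‖ * ‖betaIntegral z w‖)
      = W ^ (n + 1) * ‖betaIntegral z w‖ * ‖Gamma (z + w)‖ := by ring
    _ ≤ c ^ (n + 1) * n ! * ‖Gamma (z + w)‖ := by gcongr

end Beta

section MultiIndex

variable {κ : ℕ}

lemma mdot_add (r : Fin κ → ℂ) (k l : Fin κ → ℕ) : mdot r (k + l) = mdot r k + mdot r l := by
  simp only [mdot, Pi.add_apply, Nat.cast_add, add_mul, Finset.sum_add_distrib]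

lemma msize_add (k l : Fin κ → ℕ) : msize (k + l) = msize k + msize l := by
  simp only [msize, Pi.add_apply, Finset.sum_add_distrib]

lemma re_mdot (r : Fin κ → ℂ) (k : Fin κ → ℕ) : (mdot r k).re = ∑ i, (k i : ℝ) * (r i).re := by
  simp [mdot, Complex.re_sum]

lemma norm_mdot_le (r : Fin κ → ℂ) (k : Fin κ → ℕ) : ‖mdot r k‖ ≤ ∑ i, (k i : ℝ) * ‖r i‖ :=
  (norm_sum_le _ _).trans_eq (by simp)

lemma one_le_msize {k : Fin κ → ℕ} (hk : k ≠ 0) : 1 ≤ msize k := by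
  obtain ⟨i, hi⟩ := Function.ne_iff.mp hk
  exact (Nat.one_le_iff_ne_zero.mpr hi).trans (Finset.single_le_sum (by simp) (Finset.mem_univ i))

lemma re_mdot_pos {r : Fin κ → ℂ} (hr : ∀ i, 0 < (r i).re) {k : Fin κ → ℕ} (hk : k ≠ 0) :
    0 < (mdot r k).re := by
  obtain ⟨i, hi⟩ := Function.ne_iff.mp hk
  rw [re_mdot]
  exact Finset.sum_pos' (fun j _ => by have := hr j; positivity)
    ⟨i, Finset.mem_univ i, mul_pos (by simpa [Nat.pos_iff_ne_zero] using hi) (hr i)⟩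

lemma exists_weight_le_mul_re_mdot {r : Fin κ → ℂ} (hr : ∀ i, 0 < (r i).re) {𝒦 : ℝ}
    (h𝒦 : 0 ≤ 𝒦) (lam : ℂ) :
    ∃ c : ℝ, ∀ k : Fin κ → ℕ, k ≠ 0 → ‖lam + mdot r k‖ + 𝒦 * msize k ≤ c * (mdot r k).re := by
  set c := ∑ i, (‖lam‖ + ‖r i‖ + 𝒦) / (r i).re
  refine ⟨c, fun k hk => ?_⟩
  have hk1 : (1 : ℝ) ≤ msize k := by exact_mod_cast one_le_msize hk
  have hc : ∀ i, ‖lam‖ + ‖r i‖ + 𝒦 ≤ c * (r i).re := fun i => by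
    rw [← div_le_iff₀ (hr i)]
    exact Finset.single_le_sum (f := fun i => (‖lam‖ + ‖r i‖ + 𝒦) / (r i).re)
      (fun j _ => by have := hr j; positivity) (Finset.mem_univ i)
  calc ‖lam + mdot r k‖ + 𝒦 * msize k
      ≤ ‖lam‖ * msize k + ∑ i, (k i : ℝ) * ‖r i‖ + 𝒦 * msize k := by
        gcongr
        exact (norm_add_le _ _).trans (add_le_add (le_mul_of_one_le_right (norm_nonneg _) hk1)
          (norm_mdot_le r k))
    _ = ∑ i, (k i : ℝ) * (‖lam‖ + ‖r i‖ + 𝒦) := by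
        simp only [msize, Nat.cast_sum, Finset.mul_sum, mul_add, Finset.sum_add_distrib,
          mul_comm _ (k _ : ℝ)]
    _ ≤ ∑ i, (k i : ℝ) * (c * (r i).re) := by gcongr with i; exact hc i
    _ = c * (mdot r k).re := by
        rw [re_mdot, Finset.mul_sum]
        exact Finset.sum_congr rfl fun i _ => by ring

end MultiIndex

lemma summable_and_tsum_le_of_injective {α β : Type*} {f : α → ℝ} {g : β → ℝ} {e : β → α}
    (he : Function.Injective e) (hf : ∀ a, 0 ≤ f a) (hfe : ∀ a ∉ Set.range e, f a = 0) {A : ℝ}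
    (hle : ∀ b, f (e b) ≤ A * g b) (hg : Summable g) :
    Summable f ∧ ∑' a, f a ≤ A * ∑' b, g b := by
  have hfe_summable : Summable (f ∘ e) :=
    .of_nonneg_of_le (fun b => hf _) hle (hg.mul_left A)
  refine ⟨(he.summable_iff hfe).mp hfe_summable, ?_⟩
  rw [← he.tsum_eq fun a ha => not_not.mp fun h => ha (hfe a h), ← tsum_mul_left]
  exact hfe_summable.tsum_le_tsum hle (hg.mul_left A)

/-- `normJ r s R 𝒦 lam j η` is, by definition,
`∑' m ≠ 0, gammaWeight r s 𝒦 lam j m * normR R (η m)`. -/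
noncomputable def gammaWeight {κ : ℕ} (r : Fin κ → ℂ) (s 𝒦 : ℝ) (lam : ℂ) (j : ℕ)
    (m : Fin κ → ℕ) : ℝ :=
  (‖lam + mdot r m‖ + 𝒦 * msize m) ^ j / ‖Complex.Gamma (mdot r m / (s : ℂ))‖

noncomputable def monomialEulerOp {κ : ℕ} (lam : ℂ) (r : Fin κ → ℂ) (l : Fin κ → ℕ) (j : ℕ)
    (a : ℂ[X]) (η : (Fin κ → ℕ) → ℂ[X]) (m : Fin κ → ℕ) : ℂ[X] :=
  if l ≤ m ∧ m ≠ l then a * (DeltaOp lam r (m - l))^[j] (η (m - l)) else 0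

section MonomialEulerOp

variable {κ : ℕ} {r : Fin κ → ℂ} {s R 𝒦 : ℝ} {lam : ℂ} {l : Fin κ → ℕ} {j : ℕ} {a : ℂ[X]}

lemma gammaWeight_nonneg (h𝒦 : 0 ≤ 𝒦) (m : Fin κ → ℕ) : 0 ≤ gammaWeight r s 𝒦 lam j m := by
  unfold gammaWeight; positivity

lemma normJ_nonneg (hR : 0 ≤ R) (h𝒦 : 0 ≤ 𝒦) (η : (Fin κ → ℕ) → ℂ[X]) :
    0 ≤ normJ r s R 𝒦 lam j η :=
  tsum_nonneg fun m => mul_nonneg (gammaWeight_nonneg h𝒦 m.1) (normR_nonneg hR _)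

variable {η : (Fin κ → ℕ) → ℂ[X]}

lemma monomialEulerOp_zero : monomialEulerOp lam r l j a η 0 = 0 :=
  if_neg fun h => h.2 (le_antisymm (fun _ => Nat.zero_le _) h.1)

lemma monomialEulerOp_add {k : Fin κ → ℕ} (hk : k ≠ 0) :
    monomialEulerOp lam r l j a η (k + l) = a * (DeltaOp lam r k)^[j] (η k) := by
  have hkl : l ≤ k + l ∧ k + l ≠ l := ⟨le_add_self, fun h => hk (add_eq_right.mp h)⟩
  rw [monomialEulerOp, if_pos hkl, add_tsub_cancel_right]

lemma exists_add_eq_of_monomialEulerOp_ne_zero {m : Fin κ → ℕ}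
    (h : monomialEulerOp lam r l j a η m ≠ 0) : ∃ k ≠ 0, k + l = m := by
  unfold monomialEulerOp at h
  split_ifs at h with hm
  · exact ⟨m - l, fun h0 => hm.2 (le_antisymm (tsub_eq_zero_iff_le.mp h0) hm.1),
      tsub_add_cancel_of_le hm.1⟩
  · exact absurd rfl h

lemma natDegree_monomialEulerOp_le (h𝒦 : 0 ≤ 𝒦) (ha : (a.natDegree : ℝ) ≤ 𝒦 * msize l)
    (hη : ∀ m, ((η m).natDegree : ℝ) ≤ 𝒦 * msize m) (m : Fin κ → ℕ) :
    ((monomialEulerOp lam r l j a η m).natDegree : ℝ) ≤ 𝒦 * msize m := by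
  by_cases h : monomialEulerOp lam r l j a η m = 0
  · rw [h, natDegree_zero, Nat.cast_zero]; positivity
  obtain ⟨k, hk, rfl⟩ := exists_add_eq_of_monomialEulerOp_ne_zero h
  rw [monomialEulerOp_add hk, msize_add, Nat.cast_add, mul_add, add_comm]
  refine (Nat.cast_le.mpr (natDegree_mul_le (p := a))).trans ?_
  push_cast
  exact add_le_add ha ((Nat.cast_le.mpr (natDegree_iterate_deltaOp_le lam r k j _)).trans (hη k))

lemma normR_monomialEulerOp_add_le (hR : 1 ≤ R) {k : Fin κ → ℕ} (hk : k ≠ 0)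
    (hηk : ((η k).natDegree : ℝ) ≤ 𝒦 * msize k) :
    normR R (monomialEulerOp lam r l j a η (k + l)) ≤
      normR R a * ((‖lam + mdot r k‖ + 𝒦 * msize k) ^ j * normR R (η k)) := by
  have hR0 : 0 ≤ R := zero_le_one.trans hR
  rw [monomialEulerOp_add hk]
  exact (normR_mul_le hR0 _ _).trans
    (mul_le_mul_of_nonneg_left (normR_iterate_deltaOp_le lam r k hR j hηk) (normR_nonneg hR0 a))

open Nat in
lemma exists_gammaWeight_mul_normR_monomialEulerOp_le (hr : ∀ i, 0 < (r i).re) (hs : 0 < s)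
    (hR : 1 ≤ R) (h𝒦 : 0 ≤ 𝒦) (ℓ n : ℕ) (hlr : ((n : ℝ) + 1) * s ≤ (mdot r l).re) :
    ∃ A : ℝ, ∀ (η : (Fin κ → ℕ) → ℂ[X]) (k : Fin κ → ℕ), k ≠ 0 →
      ((η k).natDegree : ℝ) ≤ 𝒦 * msize k →
      gammaWeight r s 𝒦 lam 0 (k + l) *
          normR R (monomialEulerOp lam r l (ℓ + (n + 1)) a η (k + l)) ≤
        A * (gammaWeight r s 𝒦 lam ℓ k * normR R (η k)) := by
  obtain ⟨c, hc⟩ := exists_weight_le_mul_re_mdot hr h𝒦 lam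
  set w : ℂ := mdot r l / s
  have hw : (n : ℝ) + 1 ≤ w.re := by rw [Complex.div_ofReal_re, le_div_iff₀ hs]; exact hlr
  refine ⟨normR R a * ((c * s) ^ (n + 1) * n ! / ‖Complex.Gamma w‖), fun η k hk hηk => ?_⟩
  set W := ‖lam + mdot r k‖ + 𝒦 * msize k
  set z : ℂ := mdot r k / s
  have hz : 0 < z.re := by rw [Complex.div_ofReal_re]; exact div_pos (re_mdot_pos hr hk) hs
  have hWz : W ≤ c * s * z.re := by
    rw [Complex.div_ofReal_re, mul_assoc, mul_div_cancel₀ _ hs.ne']; exact hc k hk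
  have hshift : gammaWeight r s 𝒦 lam 0 (k + l) = 1 / ‖Complex.Gamma (z + w)‖ := by
    rw [gammaWeight, pow_zero, mdot_add, add_div]
  have hR0 : 0 ≤ R := zero_le_one.trans hR
  have ha0 := normR_nonneg hR0 a
  have hηk0 := normR_nonneg hR0 (η k)
  calc gammaWeight r s 𝒦 lam 0 (k + l) *
        normR R (monomialEulerOp lam r l (ℓ + (n + 1)) a η (k + l))
      ≤ 1 / ‖Complex.Gamma (z + w)‖ * (normR R a * (W ^ (ℓ + (n + 1)) * normR R (η k))) := by
        rw [hshift]; gcongr; exact normR_monomialEulerOp_add_le hR hk hηk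
    _ = normR R a * normR R (η k) * W ^ ℓ * (W ^ (n + 1) / ‖Complex.Gamma (z + w)‖) := by ring
    _ ≤ normR R a * normR R (η k) * W ^ ℓ *
          ((c * s) ^ (n + 1) * n ! / ‖Complex.Gamma w‖ / ‖Complex.Gamma z‖) := by
        gcongr _ * ?_
        exact pow_div_norm_Gamma_add_le hz hw (by positivity) hWz
    _ = _ := by rw [gammaWeight]; ring

theorem exists_normJ_monomialEulerOp_le (hr : ∀ i, 0 < (r i).re) (hs : 0 < s) (hR : 1 ≤ R)
    (h𝒦 : 0 ≤ 𝒦) (ha : (a.natDegree : ℝ) ≤ 𝒦 * msize l) (ℓ n : ℕ)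
    (hlr : ((n : ℝ) + 1) * s ≤ (mdot r l).re) :
    ∃ A : ℝ, ∀ η : (Fin κ → ℕ) → ℂ[X], memHJ r s R 𝒦 lam ℓ η →
      memHJ r s R 𝒦 lam 0 (monomialEulerOp lam r l (ℓ + (n + 1)) a η) ∧
      normJ r s R 𝒦 lam 0 (monomialEulerOp lam r l (ℓ + (n + 1)) a η) ≤
        A * normJ r s R 𝒦 lam ℓ η := by
  obtain ⟨A, hA⟩ := exists_gammaWeight_mul_normR_monomialEulerOp_le (a := a) (lam := lam)
    hr hs hR h𝒦 ℓ n hlr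
  refine ⟨A, fun η ⟨_, hηdeg, hηsum⟩ => ?_⟩
  set D := monomialEulerOp lam r l (ℓ + (n + 1)) a η
  let e : {m : Fin κ → ℕ // m ≠ 0} → {m : Fin κ → ℕ // m ≠ 0} :=
    fun k => ⟨k.1 + l, fun h => k.2 (add_eq_zero.mp h).1⟩
  have he : Function.Injective e := fun k k' h => Subtype.ext (add_right_cancel (congrArg (·.1) h))
  have hsupp : ∀ m ∉ Set.range e, gammaWeight r s 𝒦 lam 0 m.1 * normR R (D m.1) = 0 := by
    intro m hm
    by_cases hD : D m.1 = 0
    · rw [hD, normR, support_zero, Finset.sum_empty, mul_zero]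
    obtain ⟨k, hk, hkm⟩ := exists_add_eq_of_monomialEulerOp_ne_zero hD
    exact absurd ⟨⟨k, hk⟩, Subtype.ext hkm⟩ hm
  obtain ⟨hsum, hle⟩ := summable_and_tsum_le_of_injective he
    (fun m => mul_nonneg (gammaWeight_nonneg h𝒦 m.1) (normR_nonneg (by linarith) _)) hsupp
    (fun k => hA η k.1 k.2 (hηdeg k.1)) hηsum
  exact ⟨⟨monomialEulerOp_zero, natDegree_monomialEulerOp_le h𝒦 ha hηdeg, hsum⟩, hle⟩

end MonomialEulerOp

theorem monomial_euler_operator_continuous_general (κ : ℕ) (r : Fin κ → ℂ)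
    (hr : ∀ i, 0 < (r i).re) (s R 𝒦 : ℝ) (hs : 0 < s) (hR : 1 < R) (h𝒦 : 0 ≤ 𝒦)
    (lam : ℂ) (ℓ j : ℕ) (hℓj : ℓ < j)
    (l : Fin κ → ℕ) (hlr : ((j : ℝ) - ℓ) * s ≤ (mdot r l).re)
    (a : Polynomial ℂ) (ha : (a.natDegree : ℝ) ≤ 𝒦 * msize l) :
    ∃ A0 > (0 : ℝ), ∀ η : (Fin κ → ℕ) → Polynomial ℂ, memHJ r s R 𝒦 lam ℓ η →
      memHJ r s R 𝒦 lam 0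
        (fun m => if l ≤ m ∧ m ≠ l then a * (DeltaOp lam r (m - l))^[j] (η (m - l)) else 0) ∧
      normJ r s R 𝒦 lam 0
        (fun m => if l ≤ m ∧ m ≠ l then a * (DeltaOp lam r (m - l))^[j] (η (m - l)) else 0) ≤
        A0 * normJ r s R 𝒦 lam ℓ η := by
  obtain ⟨n, rfl⟩ : ∃ n, j = ℓ + (n + 1) := ⟨j - ℓ - 1, by omega⟩
  have hlr' : ((n : ℝ) + 1) * s ≤ (mdot r l).re := by
    convert hlr using 2; push_cast; ring
  obtain ⟨A, hA⟩ := exists_normJ_monomialEulerOp_le hr hs hR.le h𝒦 ha ℓ n hlr'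
  refine ⟨max A 1, by positivity, fun η hη => ?_⟩
  obtain ⟨hmem, hnorm⟩ := hA η hη
  refine ⟨hmem, hnorm.trans ?_⟩
  gcongr
  · exact normJ_nonneg (by linarith) h𝒦 η
  · exact le_max_left A 1

/-- Lemma 5: if `Re⟨l,r⟩ ≥ (j−ℓ)s` and `deg a ≤ 𝒦|l|`, then the linear operator
`a(t)·x^l·(λ+δ̂)^j`, sending the family `(C_m)` to the family
`m ↦ a·Δ_{m−l}^j C_{m−l}` (and `0` where `m−l ∉ ℤ₊^κ∖{0}`), is continuous from `H^ℓ`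
to `H^0`. -/
theorem monomial_euler_operator_continuous (κ : ℕ) (hκ : 1 ≤ κ) (r : Fin κ → ℂ)
    (hr : ∀ i, 0 < (r i).re) (s R 𝒦 : ℝ) (hs : 0 < s) (hR : 1 < R) (h𝒦 : 0 ≤ 𝒦)
    (lam : ℂ) (hlam : 0 ≤ lam.re) (ℓ j : ℕ) (hℓj : ℓ < j)
    (l : Fin κ → ℕ) (hl : l ≠ 0) (hlr : ((j : ℝ) - ℓ) * s ≤ (mdot r l).re)
    (a : Polynomial ℂ) (ha : (a.natDegree : ℝ) ≤ 𝒦 * msize l) :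
    ∃ A0 > (0 : ℝ), ∀ η : (Fin κ → ℕ) → Polynomial ℂ, memHJ r s R 𝒦 lam ℓ η →
      memHJ r s R 𝒦 lam 0
        (fun m => if l ≤ m ∧ m ≠ l then a * (DeltaOp lam r (m - l))^[j] (η (m - l)) else 0) ∧
      normJ r s R 𝒦 lam 0
        (fun m => if l ≤ m ∧ m ≠ l then a * (DeltaOp lam r (m - l))^[j] (η (m - l)) else 0) ≤
        A0 * normJ r s R 𝒦 lam ℓ η :=
  monomial_euler_operator_continuous_general κ r hr s R 𝒦 hs hR h𝒦 lam ℓ j hℓj l hlr a ha
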